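/- arXiv:2403.09600 — 3 statements merged into one kernel-verified Lean document; each statement's English description precedes it below -/
import Mathlib

section
/- Let n ≥ 4, let z_1, ..., z_n be pairwise distinct complex numbers, and consider the (2n)×(2n) block upper-triangular matrix M = [[Ã, B̃],[0, C̃]] where Ã is the n×n matrix whose i-th row is (1/∏_{k≠i}(z_i - z_k))·(1, z_i, ..., z_i^{n-4}) in the first n-3 columns, followed in the last 3 columns by (z_2 z_3, -(z_2+z_3), 1)/((z_2-z_1)(z_3-z_1)) for i=1, (z_1 z_3, -(z_1+z_3), 1)/((z_1-z_2)(z_3-z_2)) for i=2, (z_1 z_2, -(z_1+z_2), 1)/((z_1-z_3)(z_2-z_3)) for i=3, and zeros for i ≥ 4; and C̃ is the n×n matrix whose i-th row is (1/∏_{k≠i}(z_i - z_k))·(1, z_i, ..., z_i^{n-3}) in the first n-2 columns, followed in the last 2 columns by (z_2, -1)/(z_2-z_1) for i=1, (z_1, -1)/(z_1-z_2) for i=2, and zeros for i ≥ 3. Then det(Ã) = det(C̃), i.e. det(Ã)·det(C̃)^{-1} = 1. -/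
/-- The matrix `Ã` from Appendix A: first `n-3` columns carry `z_i^{a-1}/∏_{k≠i}(z_i-z_k)`,
last three columns carry the inverse 3×3 Vandermonde rows for `z_1, z_2, z_3`. -/
noncomputable def Atilde (n : ℕ) (hn : 4 ≤ n) (z : Fin n → ℂ) :
    Matrix (Fin n) (Fin n) ℂ :=
  Matrix.of fun i j =>
    if (j : ℕ) < n - 3 then
      z i ^ (j : ℕ) / ∏ k ∈ Finset.univ.erase i, (z i - z k)
    else
      if (i : ℕ) = 0 then
        (if (j : ℕ) = n - 3 then z ⟨1, by omega⟩ * z ⟨2, by omega⟩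
          else if (j : ℕ) = n - 2 then -(z ⟨1, by omega⟩ + z ⟨2, by omega⟩) else 1) /
          ((z ⟨1, by omega⟩ - z ⟨0, by omega⟩) * (z ⟨2, by omega⟩ - z ⟨0, by omega⟩))
      else if (i : ℕ) = 1 then
        (if (j : ℕ) = n - 3 then z ⟨0, by omega⟩ * z ⟨2, by omega⟩
          else if (j : ℕ) = n - 2 then -(z ⟨0, by omega⟩ + z ⟨2, by omega⟩) else 1) /
          ((z ⟨0, by omega⟩ - z ⟨1, by omega⟩) * (z ⟨2, by omega⟩ - z ⟨1, by omega⟩))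
      else if (i : ℕ) = 2 then
        (if (j : ℕ) = n - 3 then z ⟨0, by omega⟩ * z ⟨1, by omega⟩
          else if (j : ℕ) = n - 2 then -(z ⟨0, by omega⟩ + z ⟨1, by omega⟩) else 1) /
          ((z ⟨0, by omega⟩ - z ⟨2, by omega⟩) * (z ⟨1, by omega⟩ - z ⟨2, by omega⟩))
      else 0

/-- The matrix `C̃` from Appendix A: first `n-2` columns carry `z_i^{b-1}/∏_{k≠i}(z_i-z_k)`,
last two columns carry the inverse 2×2 Vandermonde rows for `z_1, z_2`. -/
noncomputable def Ctilde (n : ℕ) (hn : 3 ≤ n) (z : Fin n → ℂ) :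
    Matrix (Fin n) (Fin n) ℂ :=
  Matrix.of fun i j =>
    if (j : ℕ) < n - 2 then
      z i ^ (j : ℕ) / ∏ k ∈ Finset.univ.erase i, (z i - z k)
    else
      if (i : ℕ) = 0 then
        (if (j : ℕ) = n - 2 then z ⟨1, by omega⟩ else -1) /
          (z ⟨1, by omega⟩ - z ⟨0, by omega⟩)
      else if (i : ℕ) = 1 then
        (if (j : ℕ) = n - 2 then z ⟨0, by omega⟩ else -1) /
          (z ⟨0, by omega⟩ - z ⟨1, by omega⟩)
      else 0

/-! Let `w i = ∏_{k ≠ i} (z i - z k)⁻¹` be the Lagrange nodal weights of the nodes `z`. Each column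
of `Ã` is `i ↦ w i * P (z i)` for a monic polynomial `P`: `P = X ^ j` in the first `n - 3` columns,
and `P = L * ∏_{k ≥ 3} (X - z k)` with `deg L = 2, 1, 0` in the last three. The product vanishes at
`z i` for `i ≥ 3`, and for `i < 3` it cancels the factors of `w i` with `k ≥ 3`, leaving the
inverse `3 × 3` Vandermonde entries. Hence `Ã = diag w * V * T`, with `V` the Vandermonde matrix
of `z` and `T` the coefficient matrix of the column polynomials, whose degrees are `0, …, n - 1`
permuted by the transposition of `n - 3` and `n - 1`; so `det Ã = - det (diag w) * det V`. The same argument with `∏_{k ≥ 2} (X - z k)` and the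
transposition of `n - 2` and `n - 1` gives the same value for `det C̃`. -/

open Polynomial Finset Matrix Lagrange

theorem Matrix.det_eval_matrixOfPolynomials_eq_sign_mul_det_vandermonde {R : Type*} [CommRing R]
    {n : ℕ} (v : Fin n → R) (P : Fin n → R[X]) (σ : Equiv.Perm (Fin n))
    (h_deg : ∀ j, (P j).natDegree = σ j) (h_monic : ∀ j, (P j).Monic) :
    (Matrix.of fun i j => (P j).eval (v i)).det = σ.sign * (vandermonde v).det := by
  rw [det_eval_matrixOfPolynomials_eq_det_vandermonde v (P ∘ σ.symm) (by simp [h_deg])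
    (fun j => h_monic _), ← det_permute']
  congr
  ext i j
  simp

theorem Polynomial.monic_X_sq_sub_C_mul_X_add_C {R : Type*} [CommRing R] (s e : R) :
    (X ^ 2 - C s * X + C e).Monic := by
  monicity!

namespace Lagrange

theorem natDegree_mul_nodal {R ι : Type*} [CommRing R] [Nontrivial R] {L : R[X]} (hL : L.Monic)
    (s : Finset ι) (v : ι → R) : (L * nodal s v).natDegree = L.natDegree + #s := by
  rw [hL.natDegree_mul nodal_monic, natDegree_nodal]

variable {F : Type*} [Field F]

theorem nodalWeight_union {ι : Type*} [DecidableEq ι] {s t : Finset ι} {v : ι → F} {i : ι}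
    (hst : Disjoint s t) (hi : i ∉ t) :
    nodalWeight (s ∪ t) v i = nodalWeight s v i * ((nodal t v).eval (v i))⁻¹ := by
  rw [nodalWeight, nodalWeight, erase_union_distrib, erase_eq_of_notMem hi,
    prod_union (disjoint_of_subset_left (erase_subset _ _) hst), eval_nodal]
  simp only [prod_inv_distrib]

theorem nodalWeight_univ_eq_mul {n : ℕ} (v : Fin n → F) {i m : Fin n} (hi : i < m) :
    nodalWeight univ v i = nodalWeight (Iio m) v i * ((nodal (Ici m) v).eval (v i))⁻¹ := by
  rw [← nodalWeight_union
    (disjoint_left.2 fun k hk hk' => not_lt.2 (mem_Ici.1 hk') (mem_Iio.1 hk)) (by simpa using hi)]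
  congr
  ext k
  simpa using lt_or_ge k m

theorem nodalWeight_univ_mul_eval_mul_nodal_Ici {n : ℕ} {v : Fin n → F}
    (hv : Function.Injective v) {i m : Fin n} (hi : i < m) (L : F[X]) :
    nodalWeight univ v i * (L * nodal (Ici m) v).eval (v i) =
      nodalWeight (Iio m) v i * L.eval (v i) := by
  have hΩ : (nodal (Ici m) v).eval (v i) ≠ 0 :=
    eval_nodal_not_at_node fun k hk h => not_le.2 hi (by simpa [hv h] using hk)
  rw [nodalWeight_univ_eq_mul v hi, eval_mul]
  field_simp

end Lagrange

namespace Atilde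

variable {n : ℕ}

/-- For `i < 3` and `{a, b} = {0, 1, 2} \ {i}`, its values at `z i` in the columns `n - 3, n - 2,
n - 1` are `z a * z b`, `-(z a + z b)`, `1`: the coefficients of `(X - z a) * (X - z b)`. -/
noncomputable def headPoly (hn : 4 ≤ n) (z : Fin n → ℂ) (j : Fin n) : ℂ[X] :=
  let s := z ⟨0, by omega⟩ + z ⟨1, by omega⟩ + z ⟨2, by omega⟩
  let e := z ⟨0, by omega⟩ * z ⟨1, by omega⟩ + z ⟨0, by omega⟩ * z ⟨2, by omega⟩ +
    z ⟨1, by omega⟩ * z ⟨2, by omega⟩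
  if (j : ℕ) = n - 3 then X ^ 2 - C s * X + C e else if (j : ℕ) = n - 2 then X - C s else 1

noncomputable def colPoly (hn : 4 ≤ n) (z : Fin n → ℂ) (j : Fin n) : ℂ[X] :=
  if (j : ℕ) < n - 3 then X ^ (j : ℕ) else headPoly hn z j * nodal (Ici ⟨3, by omega⟩) z

theorem monic_headPoly (hn : 4 ≤ n) (z : Fin n → ℂ) (j : Fin n) : (headPoly hn z j).Monic := by
  unfold headPoly
  split_ifs
  · exact monic_X_sq_sub_C_mul_X_add_C _ _
  · exact monic_X_sub_C _
  · exact monic_one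

theorem monic_colPoly (hn : 4 ≤ n) (z : Fin n → ℂ) (j : Fin n) : (colPoly hn z j).Monic := by
  unfold colPoly
  split_ifs
  · exact monic_X_pow _
  · exact (monic_headPoly hn z j).mul nodal_monic

theorem natDegree_colPoly (hn : 4 ≤ n) (z : Fin n → ℂ) (j : Fin n) :
    (colPoly hn z j).natDegree = Equiv.swap (⟨n - 3, by omega⟩ : Fin n) ⟨n - 1, by omega⟩ j := by
  unfold colPoly headPoly
  generalize z ⟨0, _⟩ + z ⟨1, _⟩ + z ⟨2, _⟩ = s
  generalize z ⟨0, _⟩ * z ⟨1, _⟩ + z ⟨0, _⟩ * z ⟨2, _⟩ + z ⟨1, _⟩ * z ⟨2, _⟩ = e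
  have hquad : (X ^ 2 - C s * X + C e).natDegree = 2 := by compute_degree!
  rw [Equiv.swap_apply_def]
  split_ifs <;>
    simp_all [Fin.ext_iff, natDegree_mul_nodal, monic_X_sq_sub_C_mul_X_add_C, monic_X_sub_C] <;>
    omega

end Atilde

namespace Ctilde

variable {n : ℕ}

noncomputable def headPoly (hn : 3 ≤ n) (z : Fin n → ℂ) (j : Fin n) : ℂ[X] :=
  if (j : ℕ) = n - 2 then X - C (z ⟨0, by omega⟩ + z ⟨1, by omega⟩) else 1

noncomputable def colPoly (hn : 3 ≤ n) (z : Fin n → ℂ) (j : Fin n) : ℂ[X] :=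
  if (j : ℕ) < n - 2 then X ^ (j : ℕ) else headPoly hn z j * nodal (Ici ⟨2, by omega⟩) z

theorem monic_headPoly (hn : 3 ≤ n) (z : Fin n → ℂ) (j : Fin n) : (headPoly hn z j).Monic := by
  unfold headPoly
  split_ifs
  · exact monic_X_sub_C _
  · exact monic_one

theorem monic_colPoly (hn : 3 ≤ n) (z : Fin n → ℂ) (j : Fin n) : (colPoly hn z j).Monic := by
  unfold colPoly
  split_ifs
  · exact monic_X_pow _
  · exact (monic_headPoly hn z j).mul nodal_monic

theorem natDegree_colPoly (hn : 3 ≤ n) (z : Fin n → ℂ) (j : Fin n) :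
    (colPoly hn z j).natDegree = Equiv.swap (⟨n - 2, by omega⟩ : Fin n) ⟨n - 1, by omega⟩ j := by
  unfold colPoly headPoly
  generalize z ⟨0, _⟩ + z ⟨1, _⟩ = s
  rw [Equiv.swap_apply_def]
  split_ifs <;> simp_all [Fin.ext_iff, natDegree_mul_nodal, monic_X_sub_C] <;> omega

end Ctilde

theorem Atilde_eq_diagonal_mul {n : ℕ} (hn : 4 ≤ n) {z : Fin n → ℂ} (hz : Function.Injective z) :
    Atilde n hn z =
      diagonal (nodalWeight univ z) * of fun i j => (Atilde.colPoly hn z j).eval (z i) := by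
  ext i j
  rw [diagonal_mul, of_apply]
  by_cases hj : (j : ℕ) < n - 3
  · simp [Atilde, Atilde.colPoly, hj, nodalWeight, prod_inv_distrib, div_eq_inv_mul]
  rw [Atilde.colPoly, if_neg hj]
  by_cases hi : i < ⟨3, by omega⟩
  · rw [nodalWeight_univ_mul_eval_mul_nodal_Ici hz hi]
    have hIio : (Iio ⟨3, by omega⟩ : Finset (Fin n)) =
        {⟨0, by omega⟩, ⟨1, by omega⟩, ⟨2, by omega⟩} := by
      ext k
      simp [Fin.ext_iff, Fin.lt_def]
      omega
    have hne := fun a b (h : a ≠ b) => sub_ne_zero.2 (hz.ne h)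
    obtain ⟨_ | _ | _ | k, hk⟩ := i
    rotate_right
    · simp only [Fin.lt_def] at hi
      omega
    all_goals
      simp only [Atilde, Atilde.headPoly, of_apply, hj, ↓reduceIte, nodalWeight, hIio, zero_add,
        Nat.reduceAdd, Fin.mk.injEq, ne_eq, one_ne_zero, zero_ne_one, OfNat.ofNat_ne_zero,
        OfNat.ofNat_ne_one, OfNat.zero_ne_ofNat, OfNat.one_ne_ofNat, not_false_eq_true, mem_insert,
        mem_singleton, or_self, erase_insert_of_ne, erase_insert_eq_erase, erase_eq_of_notMem,
        erase_singleton, insert_empty_eq, prod_insert, prod_singleton, prod_inv_distrib,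
        _root_.mul_inv_rev, neg_add_rev, map_add, map_mul]
      split_ifs <;> simp only [eval_add, eval_sub, eval_mul, eval_pow, eval_X, eval_C, eval_one] <;>
        field_simp [hne] <;> ring
  · have hΩ : (nodal (Ici (⟨3, by omega⟩ : Fin n)) z).eval (z i) = 0 :=
      eval_nodal_at_node (by simpa using hi)
    have hi' : 3 ≤ (i : ℕ) := not_lt.1 hi
    simp [Atilde, hj, hΩ, show (i : ℕ) ≠ 0 by omega, show (i : ℕ) ≠ 1 by omega,
      show (i : ℕ) ≠ 2 by omega]

theorem Ctilde_eq_diagonal_mul {n : ℕ} (hn : 3 ≤ n) {z : Fin n → ℂ} (hz : Function.Injective z) :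
    Ctilde n hn z =
      diagonal (nodalWeight univ z) * of fun i j => (Ctilde.colPoly hn z j).eval (z i) := by
  ext i j
  rw [diagonal_mul, of_apply]
  by_cases hj : (j : ℕ) < n - 2
  · simp [Ctilde, Ctilde.colPoly, hj, nodalWeight, prod_inv_distrib, div_eq_inv_mul]
  rw [Ctilde.colPoly, if_neg hj]
  by_cases hi : i < ⟨2, by omega⟩
  · rw [nodalWeight_univ_mul_eval_mul_nodal_Ici hz hi]
    have hIio : (Iio ⟨2, by omega⟩ : Finset (Fin n)) = {⟨0, by omega⟩, ⟨1, by omega⟩} := by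
      ext k
      simp [Fin.ext_iff, Fin.lt_def]
      omega
    have hne := fun a b (h : a ≠ b) => sub_ne_zero.2 (hz.ne h)
    obtain ⟨_ | _ | k, hk⟩ := i
    rotate_right
    · simp only [Fin.lt_def] at hi
      omega
    all_goals
      simp only [Ctilde, Ctilde.headPoly, of_apply, hj, ↓reduceIte, nodalWeight, hIio, zero_add,
        Fin.mk.injEq, ne_eq, one_ne_zero, zero_ne_one, not_false_eq_true, mem_singleton,
        erase_insert_of_ne, erase_insert_eq_erase, erase_eq_of_notMem, erase_singleton,
        insert_empty_eq, prod_singleton, prod_inv_distrib, map_add]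
      split_ifs <;> simp only [eval_add, eval_sub, eval_X, eval_C, eval_one] <;>
        field_simp [hne] <;> ring
  · have hΩ : (nodal (Ici (⟨2, by omega⟩ : Fin n)) z).eval (z i) = 0 :=
      eval_nodal_at_node (by simpa using hi)
    have hi' : 2 ≤ (i : ℕ) := not_lt.1 hi
    simp [Ctilde, hj, hΩ, show (i : ℕ) ≠ 0 by omega, show (i : ℕ) ≠ 1 by omega]

/-- `det Ã = det C̃`, i.e. the Berezinian of the transition matrix `M = [[Ã,B̃],[0,C̃]]`
equals `1`. -/
theorem det_Atilde_eq_det_Ctilde (n : ℕ) (hn : 4 ≤ n) (z : Fin n → ℂ)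
    (hz : Function.Injective z) :
    (Atilde n hn z).det = (Ctilde n (by omega) z).det := by
  rw [Atilde_eq_diagonal_mul hn hz, Ctilde_eq_diagonal_mul _ hz, det_mul, det_mul,
    det_eval_matrixOfPolynomials_eq_sign_mul_det_vandermonde _ _ _
      (Atilde.natDegree_colPoly hn z) (Atilde.monic_colPoly hn z),
    det_eval_matrixOfPolynomials_eq_sign_mul_det_vandermonde _ _ _
      (Ctilde.natDegree_colPoly _ z) (Ctilde.monic_colPoly _ z),
    Equiv.Perm.sign_swap (by simp [Fin.ext_iff]; omega),
    Equiv.Perm.sign_swap (by simp [Fin.ext_iff]; omega)]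
end

section
/- Let n ≥ 4 and z_1, ..., z_n pairwise distinct. With Ã as above, det(Ã) = (-1)^{n-3} · ∏_{1≤j<k≤3} (z_k - z_j)^{-1} · ∏_{l=4}^{n} (∏_{k≠l}(z_l - z_k))^{-1} · ∏_{4≤r<m≤n} (z_m - z_r). -/
open Finset Matrix Equiv

theorem coe_finRotate_pow_apply {n : ℕ} (k : ℕ) (i : Fin n) :
    ((finRotate n ^ k) i : ℕ) = (i + k) % n := by
  induction k with
  | zero => simp [Nat.mod_eq_of_lt i.isLt]
  | succ k ih =>
    have := i.neZero
    rw [pow_succ', Perm.mul_apply, finRotate_apply, Fin.val_add, ih, Fin.val_one', ← Nat.add_mod,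
      add_assoc]

theorem sign_finRotate_pow (m k : ℕ) :
    Perm.sign (finRotate (m + k) ^ k) = (-1) ^ (m * k) := by
  rw [map_pow, sign_finRotate, ← pow_mul]
  rcases k with _ | k
  · simp
  rw [show (m + (k + 1) - 1) * (k + 1) = m * (k + 1) + k * (k + 1) by
      rw [show m + (k + 1) - 1 = m + k by omega]; ring,
    pow_add, (Nat.even_mul_succ_self k).neg_one_pow, mul_one]

section BlockAntitriangular

variable {R : Type*} [CommRing R] {m k : ℕ}

theorem finRotate_pow_castAdd (j : Fin m) :
    (finRotate (m + k) ^ k) (Fin.castAdd k j) = ⟨k + j, by omega⟩ := by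
  ext
  rw [coe_finRotate_pow_apply, Fin.val_castAdd, Nat.mod_eq_of_lt (by omega), add_comm]

theorem finRotate_pow_natAdd (j : Fin k) :
    (finRotate (m + k) ^ k) (Fin.natAdd m j) = ⟨j, by omega⟩ := by
  ext
  rw [coe_finRotate_pow_apply, Fin.val_natAdd, show m + j + k = j + (m + k) by omega,
    Nat.add_mod_right, Nat.mod_eq_of_lt (by omega)]

theorem Matrix.det_eq_of_lowerRight_eq_zero (M : Matrix (Fin (m + k)) (Fin (m + k)) R)
    (hM : ∀ (i : Fin k) (j : Fin m), M (Fin.natAdd m i) ⟨k + j, by omega⟩ = 0) :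
    M.det = (-1) ^ (m * k) * (of fun i j : Fin m => M (Fin.castAdd k i) ⟨k + j, by omega⟩).det *
      (of fun i j : Fin k => M (Fin.natAdd m i) ⟨j, by omega⟩).det := by
  set s : R := (-1) ^ (m * k)
  have hblocks : ((M.submatrix id (finRotate (m + k) ^ k)).submatrix finSumFinEquiv
      finSumFinEquiv) = fromBlocks (of fun i j : Fin m => M (Fin.castAdd k i) ⟨k + j, by omega⟩)
        (of fun (i : Fin m) (j : Fin k) => M (Fin.castAdd k i) ⟨j, by omega⟩) 0
        (of fun i j : Fin k => M (Fin.natAdd m i) ⟨j, by omega⟩) := by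
    ext (i | i) (j | j) <;>
      simp [finRotate_pow_castAdd, finRotate_pow_natAdd, hM]
  have hdet := congrArg det hblocks
  rw [det_submatrix_equiv_self, det_permute', sign_finRotate_pow, det_fromBlocks_zero₂₁] at hdet
  have hs : s * s = 1 := by rw [← mul_pow]; simp
  push_cast at hdet
  linear_combination s * hdet - M.det * hs

end BlockAntitriangular

theorem Fin.prod_filter_le_eq_prod_natAdd {M : Type*} [CommMonoid M] {m k : ℕ}
    (g : Fin (m + k) → M) :
    ∏ l ∈ univ.filter (fun l : Fin (m + k) => m ≤ (l : ℕ)), g l =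
      ∏ i : Fin k, g (Fin.natAdd m i) := by
  simp [prod_filter, Fin.prod_univ_add, Fin.val_castAdd, fun x : Fin m => not_le.mpr x.is_lt]

theorem Fin.prod_Ioi_natAdd {M : Type*} [CommMonoid M] {m k : ℕ} (g : Fin (m + k) → M)
    (i : Fin k) :
    ∏ l ∈ Ioi (Fin.natAdd m i), g l = ∏ j ∈ Ioi i, g (Fin.natAdd m j) := by
  rw [← Fin.finsetImage_natAdd_Ioi, prod_image (Fin.natAdd_injective _ _).injOn]

theorem det_lagrangeBasisCoeffs_fin_three {K : Type*} [Field K] {a b c : K} (hab : a ≠ b)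
    (hac : a ≠ c) (hbc : b ≠ c) :
    det !![b * c / ((b - a) * (c - a)), -(b + c) / ((b - a) * (c - a)), 1 / ((b - a) * (c - a));
        a * c / ((a - b) * (c - b)), -(a + c) / ((a - b) * (c - b)), 1 / ((a - b) * (c - b));
        a * b / ((a - c) * (b - c)), -(a + b) / ((a - c) * (b - c)), 1 / ((a - c) * (b - c))] =
      ((b - a) * (c - a) * (c - b))⁻¹ := by
  rw [det_fin_three]
  simp only [of_apply, cons_val', cons_val_zero, cons_val_one, cons_val_fin_one, Matrix.cons_val]
  field_simp [sub_ne_zero.mpr hab, sub_ne_zero.mpr hac, sub_ne_zero.mpr hbc,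
    sub_ne_zero.mpr hab.symm, sub_ne_zero.mpr hac.symm, sub_ne_zero.mpr hbc.symm]
  ring

section Atilde

variable {k : ℕ} (hn : 4 ≤ 3 + k) (z : Fin (3 + k) → ℂ)

theorem Atilde_natAdd_eq_zero (i : Fin k) (j : Fin 3) :
    Atilde (3 + k) hn z (Fin.natAdd 3 i) ⟨k + j, by omega⟩ = 0 := by
  simp only [Atilde, of_apply, Fin.val_natAdd]
  rw [if_neg (by omega), if_neg (by omega), if_neg (by omega), if_neg (by omega)]

theorem det_Atilde_topRight (hz : Function.Injective z) :
    (of fun i j : Fin 3 => Atilde (3 + k) hn z (Fin.castAdd k i) ⟨k + j, by omega⟩).det =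
      ((z ⟨1, by omega⟩ - z ⟨0, by omega⟩) * (z ⟨2, by omega⟩ - z ⟨0, by omega⟩) *
        (z ⟨2, by omega⟩ - z ⟨1, by omega⟩))⁻¹ := by
  have h01 : z ⟨0, by omega⟩ ≠ z ⟨1, by omega⟩ := hz.ne (by simp)
  have h02 : z ⟨0, by omega⟩ ≠ z ⟨2, by omega⟩ := hz.ne (by simp)
  have h12 : z ⟨1, by omega⟩ ≠ z ⟨2, by omega⟩ := hz.ne (by simp)
  refine (congrArg det ?_).trans (det_lagrangeBasisCoeffs_fin_three h01 h02 h12)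
  ext i j
  fin_cases i <;> fin_cases j <;> simp only [Atilde, of_apply, Fin.val_castAdd] <;>
    simp [show 3 + k - 2 = k + 1 by omega, show 3 + k - 3 = k by omega]

theorem det_Atilde_bottomLeft :
    (of fun i j : Fin k => Atilde (3 + k) hn z (Fin.natAdd 3 i) ⟨j, by omega⟩).det =
      (∏ i : Fin k, (∏ l ∈ univ.erase (Fin.natAdd 3 i), (z (Fin.natAdd 3 i) - z l))⁻¹) *
        ∏ i : Fin k, ∏ j ∈ Ioi i, (z (Fin.natAdd 3 j) - z (Fin.natAdd 3 i)) := by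
  have hC : (of fun i j : Fin k => Atilde (3 + k) hn z (Fin.natAdd 3 i) ⟨j, by omega⟩) =
      of fun i j => (∏ l ∈ univ.erase (Fin.natAdd 3 i), (z (Fin.natAdd 3 i) - z l))⁻¹ *
        vandermonde (z ∘ Fin.natAdd 3) i j := by
    ext i j
    simp [Atilde, vandermonde_apply, div_eq_inv_mul]
  rw [hC, det_mul_column, det_vandermonde]
  rfl

end Atilde

/-- Explicit value of `det Ã`. -/
theorem det_Atilde (n : ℕ) (hn : 4 ≤ n) (z : Fin n → ℂ)
    (hz : Function.Injective z) :
    (Atilde n hn z).det =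
      (-1) ^ (n - 3) *
        ((z ⟨1, by omega⟩ - z ⟨0, by omega⟩) * (z ⟨2, by omega⟩ - z ⟨0, by omega⟩) *
            (z ⟨2, by omega⟩ - z ⟨1, by omega⟩))⁻¹ *
        (∏ l ∈ Finset.univ.filter (fun l : Fin n => 3 ≤ (l : ℕ)),
          (∏ k ∈ Finset.univ.erase l, (z l - z k))⁻¹) *
        ∏ r ∈ Finset.univ.filter (fun r : Fin n => 3 ≤ (r : ℕ)),
          ∏ m ∈ Finset.Ioi r, (z m - z r) := by
  obtain ⟨k, rfl⟩ : ∃ k, n = 3 + k := ⟨n - 3, by omega⟩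
  rw [Matrix.det_eq_of_lowerRight_eq_zero _ (Atilde_natAdd_eq_zero hn z),
    det_Atilde_topRight hn z hz, det_Atilde_bottomLeft, Fin.prod_filter_le_eq_prod_natAdd,
    Fin.prod_filter_le_eq_prod_natAdd, Nat.add_sub_cancel_left, pow_mul]
  simp_rw [Fin.prod_Ioi_natAdd]
  ring
end

section
/- Let n ≥ 3 and z_1, ..., z_n pairwise distinct. With C̃ the n×n matrix whose entry in row i, column b (1 ≤ b ≤ n-2) is z_i^{b-1}/∏_{k≠i}(z_i - z_k), whose entries in the last two columns are (z_2, -1)/(z_2-z_1) for row 1, (z_1, -1)/(z_1-z_2) for row 2, and 0 for rows 3..n: det(C̃) = (z_2 - z_1)^{-1} · ∏_{l=3}^{n} (∏_{k≠l}(z_l - z_k))^{-1} · ∏_{3≤r<m≤n} (z_m - z_r). -/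
/-- Explicit value of `det C̃`. -/
theorem det_Ctilde (n : ℕ) (hn : 3 ≤ n) (z : Fin n → ℂ)
    (hz : Function.Injective z) :
    (Ctilde n hn z).det =
      (z ⟨1, by omega⟩ - z ⟨0, by omega⟩)⁻¹ *
        (∏ l ∈ Finset.univ.filter (fun l : Fin n => 2 ≤ (l : ℕ)),
          (∏ k ∈ Finset.univ.erase l, (z l - z k))⁻¹) *
        ∏ r ∈ Finset.univ.filter (fun r : Fin n => 2 ≤ (r : ℕ)),
          ∏ m ∈ Finset.Ioi r, (z m - z r) := by
  obtain ⟨m, rfl⟩ : ∃ m, n = m + 2 := ⟨n - 2, by omega⟩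
  have hm : 1 ≤ m := by omega
  set C := Ctilde (m + 2) hn z with hC
  -- equivalences
  set f : Fin m ⊕ Fin 2 ≃ Fin (m + 2) := finSumFinEquiv with hf
  set e : Fin m ⊕ Fin 2 ≃ Fin (m + 2) :=
    (Equiv.sumComm (Fin m) (Fin 2)).trans
      (finSumFinEquiv.trans (finCongr (Nat.add_comm 2 m))) with he
  have heinl : ∀ a : Fin m, e (Sum.inl a) = ⟨(a : ℕ) + 2, by omega⟩ := by
    intro a; simp [he]; ext; simp
  have heinr : ∀ r : Fin 2, e (Sum.inr r) = ⟨(r : ℕ), by omega⟩ := by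
    intro r; simp [he]; ext; simp
  have hfinl : ∀ b : Fin m, (f (Sum.inl b) : ℕ) = (b : ℕ) := fun b => rfl
  have hfinr : ∀ c : Fin 2, (f (Sum.inr c) : ℕ) = m + (c : ℕ) := fun c => rfl
  -- the permutation
  set σ : Equiv.Perm (Fin m ⊕ Fin 2) := e.trans f.symm with hσ
  have hsign : Equiv.Perm.sign σ = 1 := by
    have hconj : f.permCongr σ = finRotate (m + 2) * finRotate (m + 2) := by
      apply Equiv.ext
      intro x
      obtain ⟨s, rfl⟩ := f.surjective x
      have hL : (f.permCongr σ) (f s) = e s := by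
        simp [Equiv.permCongr_apply, hσ]
      rw [hL]
      show e s = finRotate (m + 2) (finRotate (m + 2) (f s))
      cases s with
      | inl a =>
        rw [heinl]
        ext
        simp [finRotate_succ_apply, Fin.add_def]
        have ha : (a : ℕ) < m := a.isLt
        have hfa : (f (Sum.inl a) : ℕ) = (a : ℕ) := hfinl a
        rw [hfa, Nat.mod_eq_of_lt (by omega)]
      | inr r =>
        rw [heinr]
        ext
        simp [finRotate_succ_apply, Fin.add_def, hf]
        have hr : (r : ℕ) < 2 := r.isLt
        have h3 : m + (r : ℕ) + 1 + 1 = (r : ℕ) + (m + 2) := by ring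
        rw [h3, Nat.add_mod_right, Nat.mod_eq_of_lt (by omega)]
    have := Equiv.Perm.sign_permCongr f σ
    rw [← this, hconj, map_mul, sign_finRotate]
    simp [← pow_add]
  -- blocks
  have hmk0 : (0 : ℕ) < m + 2 := by omega
  have hmk1 : (1 : ℕ) < m + 2 := by omega
  set z1 : ℂ := z ⟨0, hmk0⟩ with hz1
  set z2 : ℂ := z ⟨1, hmk1⟩ with hz2
  have hzne : z2 - z1 ≠ 0 := by
    rw [sub_ne_zero]
    intro h
    have := hz h
    simp [Fin.ext_iff] at this
  set w : Fin m → ℂ := fun a => z ⟨(a : ℕ) + 2, by omega⟩ with hw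
  set P : Fin (m + 2) → ℂ := fun l => ∏ k ∈ Finset.univ.erase l, (z l - z k) with hP
  set A : Matrix (Fin m) (Fin m) ℂ :=
    Matrix.of (fun a b => (P ⟨(a : ℕ) + 2, by omega⟩)⁻¹ * Matrix.vandermonde w a b) with hA
  set Bm : Matrix (Fin 2) (Fin m) ℂ :=
    Matrix.of (fun r b => C (e (Sum.inr r)) (f (Sum.inl b))) with hB
  set D : Matrix (Fin 2) (Fin 2) ℂ :=
    Matrix.of (fun r c => C (e (Sum.inr r)) (f (Sum.inr c))) with hD
  have hblocks : C.submatrix e f = Matrix.fromBlocks A 0 Bm D := by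
    ext i j
    cases i with
    | inl a =>
      cases j with
      | inl b =>
        show C (e (Sum.inl a)) (f (Sum.inl b)) = A a b
        rw [heinl, hA, hC]
        show Matrix.of _ _ _ = _
        rw [Matrix.of_apply, Matrix.of_apply, Matrix.vandermonde]
        rw [if_pos (by rw [hfinl]; have := b.isLt; omega)]
        rw [hfinl, div_eq_inv_mul]
        rfl
      | inr c =>
        show C (e (Sum.inl a)) (f (Sum.inr c)) = 0
        rw [heinl, hC]
        show Matrix.of _ _ _ = _
        rw [Matrix.of_apply]
        rw [if_neg (by rw [hfinr]; have := c.isLt; omega)]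
        rw [if_neg (by simp), if_neg (by simp)]
    | inr r => cases j with
      | inl b => rfl
      | inr c => rfl
  have hdetD : D.det = (z2 - z1)⁻¹ := by
    rw [Matrix.det_fin_two]
    have e00 : D 0 0 = z2 / (z2 - z1) := by
      rw [hD, Matrix.of_apply, heinr, hC]
      show Matrix.of _ _ _ = _
      rw [Matrix.of_apply]
      rw [if_neg (by rw [hfinr]; omega), if_pos (by norm_num), if_pos (by rw [hfinr]; norm_num)]
    have e01 : D 0 1 = -1 / (z2 - z1) := by
      rw [hD, Matrix.of_apply, heinr, hC]
      show Matrix.of _ _ _ = _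
      rw [Matrix.of_apply]
      rw [if_neg (by rw [hfinr]; omega), if_pos (by norm_num), if_neg (by rw [hfinr]; omega)]
    have e10 : D 1 0 = z1 / (z1 - z2) := by
      rw [hD, Matrix.of_apply, heinr, hC]
      show Matrix.of _ _ _ = _
      rw [Matrix.of_apply]
      rw [if_neg (by rw [hfinr]; omega), if_neg (by norm_num), if_pos (by norm_num),
        if_pos (by rw [hfinr]; norm_num)]
    have e11 : D 1 1 = -1 / (z1 - z2) := by
      rw [hD, Matrix.of_apply, heinr, hC]
      show Matrix.of _ _ _ = _
      rw [Matrix.of_apply]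
      rw [if_neg (by rw [hfinr]; omega), if_neg (by norm_num), if_pos (by norm_num),
        if_neg (by rw [hfinr]; omega)]
    rw [e00, e01, e10, e11]
    have hzne' : z1 - z2 ≠ 0 := by
      intro h; apply hzne
      have h2 : z2 - z1 = -(z1 - z2) := by ring
      rw [h2, h, neg_zero]
    field_simp
    ring
  have hdetA : A.det =
      (∏ a : Fin m, (P ⟨(a : ℕ) + 2, by omega⟩)⁻¹) *
        ∏ i : Fin m, ∏ j ∈ Finset.Ioi i, (w j - w i) := by
    rw [hA, Matrix.det_mul_column, Matrix.det_vandermonde]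
  have hperm : (C.submatrix e f).det = C.det := by
    have h1 : C.submatrix ⇑e ⇑f = (C.submatrix ⇑f ⇑f).submatrix ⇑σ id := by
      ext i j
      simp [Matrix.submatrix_apply, hσ]
    rw [h1, Matrix.det_permute, Matrix.det_submatrix_equiv_self, hsign]
    simp
  have hdetC : C.det = A.det * D.det := by
    rw [← hperm, hblocks, Matrix.det_fromBlocks_zero₁₂]
  -- reindexing the products
  have hprod1 : (∏ a : Fin m, (P ⟨(a : ℕ) + 2, by omega⟩)⁻¹) =
      ∏ l ∈ Finset.univ.filter (fun l : Fin (m + 2) => 2 ≤ (l : ℕ)), (P l)⁻¹ := by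
    apply Finset.prod_nbij' (i := fun a : Fin m => (⟨(a : ℕ) + 2, by omega⟩ : Fin (m + 2)))
      (j := fun l : Fin (m + 2) => (⟨(l : ℕ) - 2, by have := l.isLt; omega⟩ : Fin m))
    · intro a _; simp
    · intro l hl; simp
    · intro a _; ext; simp
    · intro l hl
      simp only [Finset.mem_filter] at hl
      ext; simp; omega
    · intro a _; rfl
  have hprod2 : (∏ i : Fin m, ∏ j ∈ Finset.Ioi i, (w j - w i)) =
      ∏ r ∈ Finset.univ.filter (fun r : Fin (m + 2) => 2 ≤ (r : ℕ)),
        ∏ m' ∈ Finset.Ioi r, (z m' - z r) := by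
    apply Finset.prod_nbij' (i := fun a : Fin m => (⟨(a : ℕ) + 2, by omega⟩ : Fin (m + 2)))
      (j := fun l : Fin (m + 2) => (⟨(l : ℕ) - 2, by have := l.isLt; omega⟩ : Fin m))
    · intro a _; simp
    · intro l hl; simp
    · intro a _; ext; simp
    · intro l hl
      simp only [Finset.mem_filter] at hl
      ext; simp; omega
    · intro a _
      apply Finset.prod_nbij' (i := fun j : Fin m => (⟨(j : ℕ) + 2, by omega⟩ : Fin (m + 2)))
        (j := fun l : Fin (m + 2) => (⟨(l : ℕ) - 2, by have := l.isLt; omega⟩ : Fin m))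
      · intro j hj
        simp only [Finset.mem_Ioi, Fin.lt_def] at hj ⊢
        omega
      · intro l hl
        simp only [Finset.mem_Ioi, Fin.lt_def] at hl ⊢
        omega
      · intro j _; ext; simp
      · intro l hl
        simp only [Finset.mem_Ioi, Fin.lt_def] at hl
        ext; simp; omega
      · intro j _; rfl
  rw [hdetC, hdetA, hdetD, hprod1, hprod2]
  ring
end
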